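/- arXiv:2011.11500 — 2 statements merged into one kernel-verified Lean document; each statement's English description precedes it below -/
import Mathlib

section
/- For integers 1 ≤ d ≤ r ≤ k, the ratio C(r, d)/C(k, d) is at most (r/k)^d / (1 − d²/k), provided d² < k. -/
theorem choose_ratio_pow_bound (d r k : ℕ) (hd : 1 ≤ d) (hdr : d ≤ r) (hrk : r ≤ k)
    (hd2 : d ^ 2 < k) :
    (Nat.choose r d : ℝ) / (Nat.choose k d : ℝ) ≤
      ((r : ℝ) / (k : ℝ)) ^ d / (1 - (d : ℝ) ^ 2 / (k : ℝ)) := by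
  have hdk : d < k := lt_of_le_of_lt (Nat.le_self_pow two_ne_zero d) hd2
  have hK : (0:ℝ) < (k:ℝ) := by exact_mod_cast Nat.pos_of_ne_zero (by omega)
  have hKD : (0:ℝ) < (k:ℝ) - d := by
    have : (d:ℝ) < k := by exact_mod_cast hdk
    linarith
  have hE : (0:ℝ) < 1 - (d:ℝ)^2/(k:ℝ) := by
    rw [sub_pos, div_lt_one hK]; exact_mod_cast hd2
  have hfac : (0:ℝ) < (d.factorial : ℝ) := by exact_mod_cast d.factorial_pos
  have hR : (0:ℝ) ≤ (r:ℝ) := by positivity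
  -- step 1 : bound the ratio by r^d / (k-d)^d
  have h1 : (r.choose d : ℝ) ≤ (r:ℝ)^d / d.factorial := by
    have := Nat.choose_le_pow_div (α := ℝ) d r
    simpa using this
  have h2 : ((k:ℝ) - d)^d / d.factorial ≤ (k.choose d : ℝ) := by
    calc ((k:ℝ) - d)^d / d.factorial ≤ (((k + 1 - d : ℕ) : ℝ) ^ d) / d.factorial := by
          have hcast : ((k + 1 - d : ℕ) : ℝ) = (k:ℝ) + 1 - d := by
            have h : d ≤ k + 1 := by omega
            push_cast [h]; ring
          gcongr <;> first | (rw [hcast]; linarith) | linarith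
      _ ≤ (k.choose d : ℝ) := by
          have := Nat.pow_le_choose (α := ℝ) d k
          simpa using this
  have hB : (0:ℝ) < (k.choose d : ℝ) := lt_of_lt_of_le (by positivity) h2
  have step1 : (r.choose d : ℝ) / (k.choose d : ℝ) ≤ (r:ℝ)^d / ((k:ℝ)-d)^d := by
    calc (r.choose d : ℝ) / (k.choose d : ℝ)
        ≤ ((r:ℝ)^d / d.factorial) / (((k:ℝ)-d)^d / d.factorial) :=
          div_le_div₀ (by positivity) h1 (by positivity) h2
      _ = (r:ℝ)^d / ((k:ℝ)-d)^d := by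
          rw [div_div_div_cancel_right₀]
          positivity
  -- Bernoulli
  have hdk1 : (d:ℝ)/(k:ℝ) ≤ 1 := by
    rw [div_le_one hK]; exact_mod_cast hdk.le
  have hbern : 1 - (d:ℝ) * ((d:ℝ)/(k:ℝ)) ≤ (1 - (d:ℝ)/(k:ℝ))^d := by
    have h := one_add_mul_le_pow (a := -((d:ℝ)/(k:ℝ))) (by linarith) d
    have heq : (1 + -((d:ℝ)/(k:ℝ)))^d = (1 - (d:ℝ)/(k:ℝ))^d := by ring_nf
    rw [heq] at h
    linarith
  have key : ((k:ℝ))^d * (1 - (d:ℝ)^2/(k:ℝ)) ≤ ((k:ℝ)-d)^d := by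
    have h2' : (1 - (d:ℝ)/(k:ℝ))^d * (k:ℝ)^d = ((k:ℝ)-d)^d := by
      rw [← mul_pow]; congr 1; field_simp
    have h3 : (1 - (d:ℝ)^2/(k:ℝ)) * (k:ℝ)^d ≤ (1 - (d:ℝ)/(k:ℝ))^d * (k:ℝ)^d := by
      apply mul_le_mul_of_nonneg_right _ (by positivity)
      have : (d:ℝ) * ((d:ℝ)/(k:ℝ)) = (d:ℝ)^2/(k:ℝ) := by ring
      linarith [hbern, this.symm ▸ hbern]
    linarith [h2' ▸ h3]
  have step2 : (r:ℝ)^d / ((k:ℝ)-d)^d ≤ ((r:ℝ)/(k:ℝ))^d / (1 - (d:ℝ)^2/(k:ℝ)) := by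
    rw [div_pow, div_div]
    gcongr <;> first | exact key | positivity
  linarith [step1, step2]
end

section
/- Let C_{p,k} be the family of all k-element subsets of a p-element set, and for r ≤ k let B(r) = Σ_{l=r}^{k} C(k, l)·C(p−k, k−l). There exists a subfamily 𝒞 ⊆ C_{p,k} such that (i) any two distinct members of 𝒞 intersect in fewer than r elements, (ii) every member of C_{p,k} not in 𝒞 intersects some member of 𝒞 in at least r elements, and (iii) |𝒞| ≥ C(p, k)/B(r). -/
open Finset

theorem exists_coverage (p k r : ℕ) (hr : 0 < r) (hrk : r ≤ k) (hkp : k ≤ p) :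
    ∃ 𝒞 : Finset (Finset (Fin p)),
      (∀ A ∈ 𝒞, A.card = k) ∧
      (∀ A ∈ 𝒞, ∀ B ∈ 𝒞, A ≠ B → (A ∩ B).card < r) ∧
      (∀ A : Finset (Fin p), A.card = k → A ∉ 𝒞 → ∃ B ∈ 𝒞, r ≤ (A ∩ B).card) ∧
      (Nat.choose p k : ℝ) /
          (∑ l ∈ Finset.Icc r k, (Nat.choose k l : ℝ) * (Nat.choose (p - k) (k - l) : ℝ)) ≤
        (𝒞.card : ℝ) := by
  classical
  set S : Finset (Finset (Fin p)) := Finset.powersetCard k Finset.univ with hS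
  have hmemS : ∀ A : Finset (Fin p), A ∈ S ↔ A.card = k := by
    intro A; simp [hS]
  set P : Finset (Finset (Fin p)) → Prop := fun 𝒞 =>
    𝒞 ⊆ S ∧ ∀ A ∈ 𝒞, ∀ B ∈ 𝒞, A ≠ B → (A ∩ B).card < r with hP
  have hne : (Finset.univ.filter P).Nonempty := ⟨∅, by simp [hP]⟩
  obtain ⟨𝒞, h𝒞mem, hmax⟩ := Finset.exists_max_image (Finset.univ.filter P) Finset.card hne
  obtain ⟨h𝒞S, hpair⟩ : P 𝒞 := (Finset.mem_filter.mp h𝒞mem).2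
  have hcard : ∀ A ∈ 𝒞, A.card = k := fun A hA => (hmemS A).mp (h𝒞S hA)
  have hcov : ∀ A : Finset (Fin p), A.card = k → A ∉ 𝒞 → ∃ B ∈ 𝒞, r ≤ (A ∩ B).card := by
    intro A hAk hA𝒞
    by_contra h
    push_neg at h
    have hP' : P (insert A 𝒞) := by
      constructor
      · intro X hX
        rcases Finset.mem_insert.mp hX with rfl | hX
        · exact (hmemS X).mpr hAk
        · exact h𝒞S hX
      · intro X hX Y hY hXY
        rcases Finset.mem_insert.mp hX with rfl | hX'
        · rcases Finset.mem_insert.mp hY with rfl | hY'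
          · exact absurd rfl hXY
          · exact h Y hY'
        · rcases Finset.mem_insert.mp hY with rfl | hY'
          · rw [Finset.inter_comm]; exact h X hX'
          · exact hpair X hX' Y hY' hXY
    have := hmax (insert A 𝒞) (Finset.mem_filter.mpr ⟨Finset.mem_univ _, hP'⟩)
    rw [Finset.card_insert_of_notMem hA𝒞] at this
    omega
  refine ⟨𝒞, hcard, hpair, hcov, ?_⟩
  -- counting
  set Br : ℕ := ∑ l ∈ Finset.Icc r k, k.choose l * (p - k).choose (k - l) with hBr
  have hball : ∀ B ∈ 𝒞, (S.filter (fun A => r ≤ (A ∩ B).card)).card ≤ Br := by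
    intro B hB
    have hBk : B.card = k := hcard B hB
    have hsub : S.filter (fun A => r ≤ (A ∩ B).card) ⊆
        (Finset.Icc r k).biUnion (fun l => S.filter (fun A => (A ∩ B).card = l)) := by
      intro A hA
      obtain ⟨hAS, hrA⟩ := Finset.mem_filter.mp hA
      refine Finset.mem_biUnion.mpr ⟨(A ∩ B).card, ?_, Finset.mem_filter.mpr ⟨hAS, rfl⟩⟩
      refine Finset.mem_Icc.mpr ⟨hrA, ?_⟩
      calc (A ∩ B).card ≤ B.card := Finset.card_le_card (Finset.inter_subset_right)
        _ = k := hBk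
    have hl : ∀ l ∈ Finset.Icc r k,
        (S.filter (fun A => (A ∩ B).card = l)).card ≤ k.choose l * (p - k).choose (k - l) := by
      intro l hl
      have := Finset.card_le_card_of_injOn (fun A => (A ∩ B, A \ B))
        (s := S.filter (fun A => (A ∩ B).card = l))
        (t := (B.powersetCard l) ×ˢ ((Bᶜ).powersetCard (k - l))) ?_ ?_
      · refine this.trans ?_
        rw [Finset.card_product, Finset.card_powersetCard, Finset.card_powersetCard, hBk,
          Finset.card_compl, Fintype.card_fin, hBk]
      · intro A hA
        obtain ⟨hAS, hAl⟩ := Finset.mem_filter.mp hA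
        have hAk : A.card = k := (hmemS A).mp hAS
        refine Finset.mem_product.mpr ⟨?_, ?_⟩
        · exact Finset.mem_powersetCard.mpr ⟨Finset.inter_subset_right, hAl⟩
        · refine Finset.mem_powersetCard.mpr ⟨?_, ?_⟩
          · intro x hx
            simp only [Finset.mem_sdiff] at hx
            simpa using hx.2
          · have h1 := Finset.card_sdiff_add_card_inter A B
            show (A \ B).card = k - l
            omega
      · intro A hA A' hA' hEq
        simp only [Prod.mk.injEq] at hEq
        have h2 : ∀ X : Finset (Fin p), X ∩ B ∪ X \ B = X := fun X => by
          rw [Finset.union_comm]; exact Finset.sdiff_union_inter X B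
        have : A ∩ B ∪ A \ B = A' ∩ B ∪ A' \ B := by rw [hEq.1, hEq.2]
        rwa [h2, h2] at this
    calc (S.filter (fun A => r ≤ (A ∩ B).card)).card
        ≤ ((Finset.Icc r k).biUnion (fun l => S.filter (fun A => (A ∩ B).card = l))).card :=
          Finset.card_le_card hsub
      _ ≤ ∑ l ∈ Finset.Icc r k, (S.filter (fun A => (A ∩ B).card = l)).card :=
          Finset.card_biUnion_le
      _ ≤ Br := Finset.sum_le_sum hl
  have hScov : S ⊆ 𝒞.biUnion (fun B => S.filter (fun A => r ≤ (A ∩ B).card)) := by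
    intro A hAS
    have hAk : A.card = k := (hmemS A).mp hAS
    by_cases hA𝒞 : A ∈ 𝒞
    · exact Finset.mem_biUnion.mpr ⟨A, hA𝒞, Finset.mem_filter.mpr ⟨hAS, by
        rw [Finset.inter_self, hAk]; exact hrk⟩⟩
    · obtain ⟨B, hB, hrB⟩ := hcov A hAk hA𝒞
      exact Finset.mem_biUnion.mpr ⟨B, hB, Finset.mem_filter.mpr ⟨hAS, hrB⟩⟩
  have hmain : p.choose k ≤ 𝒞.card * Br := by
    have hScard : S.card = p.choose k := by
      rw [hS, Finset.card_powersetCard, Finset.card_univ, Fintype.card_fin]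
    calc p.choose k = S.card := hScard.symm
      _ ≤ ((𝒞.biUnion (fun B => S.filter (fun A => r ≤ (A ∩ B).card)))).card :=
          Finset.card_le_card hScov
      _ ≤ ∑ B ∈ 𝒞, (S.filter (fun A => r ≤ (A ∩ B).card)).card := Finset.card_biUnion_le
      _ ≤ ∑ _B ∈ 𝒞, Br := Finset.sum_le_sum hball
      _ = 𝒞.card * Br := by rw [Finset.sum_const, smul_eq_mul]
  have hBrpos : 0 < Br := by
    have hk : k ∈ Finset.Icc r k := Finset.mem_Icc.mpr ⟨hrk, le_refl k⟩
    have : k.choose k * (p - k).choose (k - k) = 1 := by simp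
    calc 0 < k.choose k * (p - k).choose (k - k) := by rw [this]; norm_num
      _ ≤ Br := Finset.single_le_sum (f := fun l => k.choose l * (p - k).choose (k - l))
          (fun _ _ => Nat.zero_le _) hk
  have hsum : (∑ l ∈ Finset.Icc r k, (Nat.choose k l : ℝ) * (Nat.choose (p - k) (k - l) : ℝ))
      = (Br : ℝ) := by
    rw [hBr]; push_cast; ring_nf
  rw [hsum, div_le_iff₀ (by exact_mod_cast hBrpos)]
  exact_mod_cast hmain
end
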